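/- arXiv:1203.0407 — 7 statements merged into one kernel-verified Lean document; each statement's English description precedes it below -/
import Mathlib

section
/- Let P be a weakly connected and convex finite collection of unit cells in ℕ², and let a, b ∈ V(P) be two vertices in horizontal position (same second coordinate) or vertical position (same first coordinate). Then every lattice point of the segment [a,b] belongs to V(P). -/
open scoped BigOperators

abbrev Cell : Type := ℕ × ℕ

/-- The four corners of the unit cell with lower left corner `a`. -/
def cellVerts (a : Cell) : Finset (ℕ × ℕ) :=
  {a, (a.1 + 1, a.2), (a.1, a.2 + 1), (a.1 + 1, a.2 + 1)}

/-- The vertex set of a collection of cells. -/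
def verts (P : Finset Cell) : Finset (ℕ × ℕ) := P.biUnion cellVerts

/-- Row convexity of a collection of cells. -/
def RowConvex (P : Finset Cell) : Prop :=
  ∀ a ∈ P, ∀ b ∈ P, a.2 = b.2 → ∀ r : ℕ, a.1 ≤ r → r ≤ b.1 → (r, a.2) ∈ P

/-- Column convexity of a collection of cells. -/
def ColConvex (P : Finset Cell) : Prop :=
  ∀ a ∈ P, ∀ b ∈ P, a.1 = b.1 → ∀ s : ℕ, a.2 ≤ s → s ≤ b.2 → (a.1, s) ∈ P

/-- A collection of cells is convex if it is row and column convex. -/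
def IsConvexColl (P : Finset Cell) : Prop := RowConvex P ∧ ColConvex P

/-- Weak connectedness: any two cells are joined by a sequence of cells of `P`
in which consecutive cells share at least one vertex. -/
def WeaklyConnected (P : Finset Cell) : Prop :=
  ∀ a ∈ P, ∀ b ∈ P,
    Relation.ReflTransGen
      (fun c d => c ∈ P ∧ d ∈ P ∧ (cellVerts c ∩ cellVerts d).Nonempty) a b

/-- Two cells share an edge. -/
def edgeAdj (a b : Cell) : Prop :=
  (a.1 = b.1 ∧ (a.2 + 1 = b.2 ∨ b.2 + 1 = a.2)) ∨
  (a.2 = b.2 ∧ (a.1 + 1 = b.1 ∨ b.1 + 1 = a.1))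

/-- Connectedness: any two cells are joined by an edge-sharing path of cells of `P`. -/
def ConnectedColl (P : Finset Cell) : Prop :=
  ∀ a ∈ P, ∀ b ∈ P,
    Relation.ReflTransGen (fun c d => c ∈ P ∧ d ∈ P ∧ edgeAdj c d) a b

/-- `Q` is a connected component of `P`. -/
def IsComponent (P Q : Finset Cell) : Prop :=
  Q ⊆ P ∧ Q.Nonempty ∧ ConnectedColl Q ∧
    ∀ R : Finset Cell, Q ⊆ R → R ⊆ P → ConnectedColl R → R = Q

/-- The cell `c` belongs to the interval `[a,b]`. -/
def cellInBox (a b : ℕ × ℕ) (c : Cell) : Prop :=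
  a.1 ≤ c.1 ∧ c.1 + 1 ≤ b.1 ∧ a.2 ≤ c.2 ∧ c.2 + 1 ≤ b.2

/-- `c` is a border cell of the interval `[a,b]`. -/
def borderCell (a b : ℕ × ℕ) (c : Cell) : Prop :=
  cellInBox a b c ∧ (c.1 = a.1 ∨ c.1 + 1 = b.1 ∨ c.2 = a.2 ∨ c.2 + 1 = b.2)

/-- A collection of cells is simple (has no holes). -/
def SimpleColl (P : Finset Cell) : Prop :=
  ∀ a b : ℕ × ℕ, a.1 < b.1 → a.2 < b.2 →
    (∀ v ∈ verts P, a.1 < v.1 ∧ v.1 < b.1 ∧ a.2 < v.2 ∧ v.2 < b.2) →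
    ∀ c : Cell, cellInBox a b c → c ∉ P →
      ∃ d : Cell, borderCell a b d ∧
        Relation.ReflTransGen
          (fun u v => cellInBox a b u ∧ cellInBox a b v ∧ u ∉ P ∧ v ∉ P ∧ edgeAdj u v) c d

/-- `[a,b]` is an inner interval of `P`: it is proper and all of its cells belong to `P`. -/
def InnerInterval (P : Finset Cell) (a b : ℕ × ℕ) : Prop :=
  a.1 < b.1 ∧ a.2 < b.2 ∧
    ∀ r s : ℕ, a.1 ≤ r → r < b.1 → a.2 ≤ s → s < b.2 → (r, s) ∈ P

/-- The set of inner 2-minors of `P`. -/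
def innerMinors (K : Type*) [Field K] (P : Finset Cell) :
    Set (MvPolynomial {v : ℕ × ℕ // v ∈ verts P} K) :=
  { f | ∃ a b c d : {v : ℕ × ℕ // v ∈ verts P},
      InnerInterval P a.1 b.1 ∧ c.1 = (b.1.1, a.1.2) ∧ d.1 = (a.1.1, b.1.2) ∧
      f = MvPolynomial.X a * MvPolynomial.X b - MvPolynomial.X c * MvPolynomial.X d }

/-- The ideal of inner 2-minors of `P`. -/
noncomputable def innerIdeal (K : Type*) [Field K] (P : Finset Cell) :
    Ideal (MvPolynomial {v : ℕ × ℕ // v ∈ verts P} K) :=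
  Ideal.span (innerMinors K P)

lemma mem_cellVerts {v : ℕ × ℕ} {a : Cell} :
    v ∈ cellVerts a ↔ (v.1 = a.1 ∨ v.1 = a.1 + 1) ∧ (v.2 = a.2 ∨ v.2 = a.2 + 1) := by
  simp only [cellVerts, Finset.mem_insert, Finset.mem_singleton, Prod.ext_iff]
  omega

lemma mem_verts {P : Finset Cell} {v : ℕ × ℕ} :
    v ∈ verts P ↔ ∃ c ∈ P, v ∈ cellVerts c := Finset.mem_biUnion

lemma near_shared {c d : Cell} (h : (cellVerts c ∩ cellVerts d).Nonempty) :
    c.1 ≤ d.1 + 1 ∧ d.1 ≤ c.1 + 1 ∧ c.2 ≤ d.2 + 1 ∧ d.2 ≤ c.2 + 1 := by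
  obtain ⟨v, hv⟩ := h
  rw [Finset.mem_inter, mem_cellVerts, mem_cellVerts] at hv
  omega

lemma cross_row {P : Finset Cell} {A B : Cell} {j : ℕ}
    (h : Relation.ReflTransGen
      (fun c d => c ∈ P ∧ d ∈ P ∧ (cellVerts c ∩ cellVerts d).Nonempty) A B)
    (hA : A.2 ≤ j) (hB : j < B.2) :
    ∃ E ∈ P, ∃ F ∈ P, E.2 = j ∧ F.2 = j + 1 ∧ E.1 ≤ F.1 + 1 ∧ F.1 ≤ E.1 + 1 := by
  induction h with
  | refl => exact absurd hB (by omega)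
  | @tail b c h' step ih =>
    by_cases hb : j < b.2
    · exact ih hb
    · obtain ⟨hbP, hcP, hsh⟩ := step
      have hn := near_shared hsh
      exact ⟨b, hbP, c, hcP, by omega, by omega, by omega, by omega⟩

lemma cross_col {P : Finset Cell} {A B : Cell} {j : ℕ}
    (h : Relation.ReflTransGen
      (fun c d => c ∈ P ∧ d ∈ P ∧ (cellVerts c ∩ cellVerts d).Nonempty) A B)
    (hA : A.1 ≤ j) (hB : j < B.1) :
    ∃ E ∈ P, ∃ F ∈ P, E.1 = j ∧ F.1 = j + 1 ∧ E.2 ≤ F.2 + 1 ∧ F.2 ≤ E.2 + 1 := by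
  induction h with
  | refl => exact absurd hB (by omega)
  | @tail b c h' step ih =>
    by_cases hb : j < b.1
    · exact ih hb
    · obtain ⟨hbP, hcP, hsh⟩ := step
      have hn := near_shared hsh
      exact ⟨b, hbP, c, hcP, by omega, by omega, by omega, by omega⟩

lemma row_vert {P : Finset Cell} (hr : RowConvex P) {u w j x y : ℕ}
    (hu : (u, j) ∈ P) (hw : (w, j) ∈ P) (hy : y = j ∨ y = j + 1)
    (h1 : min u w ≤ x) (h2 : x ≤ max u w + 1) : (x, y) ∈ verts P := by
  have key : ∃ z, (z, j) ∈ P ∧ (x = z ∨ x = z + 1) := by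
    rcases le_total u w with h | h
    · by_cases hx : x ≤ w
      · exact ⟨x, hr (u, j) hu (w, j) hw rfl x (by omega) hx, Or.inl rfl⟩
      · exact ⟨w, hw, Or.inr (by omega)⟩
    · by_cases hx : x ≤ u
      · exact ⟨x, hr (w, j) hw (u, j) hu rfl x (by omega) hx, Or.inl rfl⟩
      · exact ⟨u, hu, Or.inr (by omega)⟩
  obtain ⟨z, hz, hxz⟩ := key
  exact mem_verts.2 ⟨(z, j), hz, mem_cellVerts.2 ⟨by simpa using hxz, by simpa using hy⟩⟩

lemma col_vert {P : Finset Cell} (hr : ColConvex P) {u w j x y : ℕ}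
    (hu : (j, u) ∈ P) (hw : (j, w) ∈ P) (hy : y = j ∨ y = j + 1)
    (h1 : min u w ≤ x) (h2 : x ≤ max u w + 1) : (y, x) ∈ verts P := by
  have key : ∃ z, (j, z) ∈ P ∧ (x = z ∨ x = z + 1) := by
    rcases le_total u w with h | h
    · by_cases hx : x ≤ w
      · exact ⟨x, hr (j, u) hu (j, w) hw rfl x (by omega) hx, Or.inl rfl⟩
      · exact ⟨w, hw, Or.inr (by omega)⟩
    · by_cases hx : x ≤ u
      · exact ⟨x, hr (j, w) hw (j, u) hu rfl x (by omega) hx, Or.inl rfl⟩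
      · exact ⟨u, hu, Or.inr (by omega)⟩
  obtain ⟨z, hz, hxz⟩ := key
  exact mem_verts.2 ⟨(j, z), hz, mem_cellVerts.2 ⟨by simpa using hy, by simpa using hxz⟩⟩

lemma two_rows {P : Finset Cell} (hr : RowConvex P) {j : ℕ} {L U E F : Cell}
    (hL : L ∈ P) (hU : U ∈ P) (hLj : L.2 = j) (hUj : U.2 = j + 1)
    (hE : E ∈ P) (hF : F ∈ P) (hEj : E.2 = j) (hFj : F.2 = j + 1)
    (h1 : E.1 ≤ F.1 + 1) (h2 : F.1 ≤ E.1 + 1)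
    {p q x : ℕ}
    (hp : (L.1 ≤ p ∧ p ≤ L.1 + 1) ∨ (U.1 ≤ p ∧ p ≤ U.1 + 1))
    (hq : (L.1 ≤ q ∧ q ≤ L.1 + 1) ∨ (U.1 ≤ q ∧ q ≤ U.1 + 1))
    (hpx : p ≤ x) (hxq : x ≤ q) : (x, j + 1) ∈ verts P := by
  have hL' : (L.1, j) ∈ P := by rw [← hLj]; exact hL
  have hE' : (E.1, j) ∈ P := by rw [← hEj]; exact hE
  have hU' : (U.1, j + 1) ∈ P := by rw [← hUj]; exact hU
  have hF' : (F.1, j + 1) ∈ P := by rw [← hFj]; exact hF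
  have key : (min L.1 E.1 ≤ x ∧ x ≤ max L.1 E.1 + 1) ∨
      (min U.1 F.1 ≤ x ∧ x ≤ max U.1 F.1 + 1) := by omega
  rcases key with ⟨k1, k2⟩ | ⟨k1, k2⟩
  · exact row_vert hr hL' hE' (Or.inr rfl) k1 k2
  · exact row_vert hr hU' hF' (Or.inl rfl) k1 k2

lemma two_cols {P : Finset Cell} (hr : ColConvex P) {j : ℕ} {L U E F : Cell}
    (hL : L ∈ P) (hU : U ∈ P) (hLj : L.1 = j) (hUj : U.1 = j + 1)
    (hE : E ∈ P) (hF : F ∈ P) (hEj : E.1 = j) (hFj : F.1 = j + 1)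
    (h1 : E.2 ≤ F.2 + 1) (h2 : F.2 ≤ E.2 + 1)
    {p q x : ℕ}
    (hp : (L.2 ≤ p ∧ p ≤ L.2 + 1) ∨ (U.2 ≤ p ∧ p ≤ U.2 + 1))
    (hq : (L.2 ≤ q ∧ q ≤ L.2 + 1) ∨ (U.2 ≤ q ∧ q ≤ U.2 + 1))
    (hpx : p ≤ x) (hxq : x ≤ q) : (j + 1, x) ∈ verts P := by
  have hL' : (j, L.2) ∈ P := by rw [← hLj]; exact hL
  have hE' : (j, E.2) ∈ P := by rw [← hEj]; exact hE
  have hU' : (j + 1, U.2) ∈ P := by rw [← hUj]; exact hU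
  have hF' : (j + 1, F.2) ∈ P := by rw [← hFj]; exact hF
  have key : (min L.2 E.2 ≤ x ∧ x ≤ max L.2 E.2 + 1) ∨
      (min U.2 F.2 ≤ x ∧ x ≤ max U.2 F.2 + 1) := by omega
  rcases key with ⟨k1, k2⟩ | ⟨k1, k2⟩
  · exact col_vert hr hL' hE' (Or.inr rfl) k1 k2
  · exact col_vert hr hU' hF' (Or.inl rfl) k1 k2

/-- In a weakly connected convex collection of cells, the lattice
points between two vertices in horizontal or vertical position all belong to `V(P)`. -/
theorem interval_subset_verts (P : Finset Cell)
    (hw : WeaklyConnected P) (hc : IsConvexColl P)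
    (a b : ℕ × ℕ) (ha : a ∈ verts P) (hb : b ∈ verts P)
    (hle : a.1 ≤ b.1 ∧ a.2 ≤ b.2) (hpos : a.2 = b.2 ∨ a.1 = b.1) :
    ∀ c : ℕ × ℕ, a.1 ≤ c.1 → c.1 ≤ b.1 → a.2 ≤ c.2 → c.2 ≤ b.2 → c ∈ verts P := by
  rintro ⟨cx, cy⟩ hc1 hc2 hc3 hc4
  simp only [Prod.fst, Prod.snd] at hc1 hc2 hc3 hc4
  obtain ⟨A, hA, hav⟩ := mem_verts.1 ha
  obtain ⟨B, hB, hbv⟩ := mem_verts.1 hb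
  rw [mem_cellVerts] at hav hbv
  obtain ⟨ha1, ha2⟩ := hav
  obtain ⟨hb1, hb2⟩ := hbv
  rcases hpos with hh | hv
  · -- horizontal: a.2 = b.2, so cy = a.2
    by_cases hAB : A.2 = B.2
    · have hA' : (A.1, A.2) ∈ P := hA
      have hB' : (B.1, A.2) ∈ P := by rw [hAB]; exact hB
      exact row_vert hc.1 hA' hB' (by omega) (by omega) (by omega)
    · rcases Nat.lt_or_ge A.2 B.2 with hlt | hge
      · have hj1 : B.2 = A.2 + 1 := by omega
        have hj2 : cy = A.2 + 1 := by omega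
        obtain ⟨E, hE, F, hF, hEj, hFj, he1, he2⟩ :=
          cross_row (hw A hA B hB) (le_refl A.2) (by omega)
        rw [hj2]
        exact two_rows hc.1 hA hB rfl hj1 hE hF hEj hFj he1 he2
          (Or.inl ⟨by omega, by omega⟩) (Or.inr ⟨by omega, by omega⟩) hc1 hc2
      · have hj1 : A.2 = B.2 + 1 := by omega
        have hj2 : cy = B.2 + 1 := by omega
        obtain ⟨E, hE, F, hF, hEj, hFj, he1, he2⟩ :=
          cross_row (hw B hB A hA) (le_refl B.2) (by omega)
        rw [hj2]
        exact two_rows hc.1 hB hA rfl hj1 hE hF hEj hFj he1 he2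
          (Or.inr ⟨by omega, by omega⟩) (Or.inl ⟨by omega, by omega⟩) hc1 hc2
  · -- vertical: a.1 = b.1, so cx = a.1
    by_cases hAB : A.1 = B.1
    · have hA' : (A.1, A.2) ∈ P := hA
      have hB' : (A.1, B.2) ∈ P := by rw [hAB]; exact hB
      exact col_vert hc.2 hA' hB' (by omega) (by omega) (by omega)
    · rcases Nat.lt_or_ge A.1 B.1 with hlt | hge
      · have hj1 : B.1 = A.1 + 1 := by omega
        have hj2 : cx = A.1 + 1 := by omega
        obtain ⟨E, hE, F, hF, hEj, hFj, he1, he2⟩ :=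
          cross_col (hw A hA B hB) (le_refl A.1) (by omega)
        rw [hj2]
        exact two_cols hc.2 hA hB rfl hj1 hE hF hEj hFj he1 he2
          (Or.inl ⟨by omega, by omega⟩) (Or.inr ⟨by omega, by omega⟩) hc3 hc4
      · have hj1 : A.1 = B.1 + 1 := by omega
        have hj2 : cx = B.1 + 1 := by omega
        obtain ⟨E, hE, F, hF, hEj, hFj, he1, he2⟩ :=
          cross_col (hw B hB A hA) (le_refl B.1) (by omega)
        rw [hj2]
        exact two_cols hc.2 hB hA rfl hj1 hE hF hEj hFj he1 he2
          (Or.inr ⟨by omega, by omega⟩) (Or.inl ⟨by omega, by omega⟩) hc3 hc4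
end

section
/- Let P be a weakly connected and convex finite collection of cells in ℕ², and let [g,h] be a proper interval of ℕ² (g=(i,j), h=(k,l) with i<k, j<l). If all four corners g, h, (k,j), (i,l) of [g,h] belong to V(P), then every cell of the interval [g,h] belongs to P. -/
open scoped BigOperators

lemma mem_cellVerts_bounds {c : Cell} {w : ℕ × ℕ} (h : w ∈ cellVerts c) :
    c.1 ≤ w.1 ∧ w.1 ≤ c.1 + 1 ∧ c.2 ≤ w.2 ∧ w.2 ≤ c.2 + 1 := by
  simp only [cellVerts, Finset.mem_insert, Finset.mem_singleton, Prod.ext_iff] at h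
  omega

lemma verts_elim {P : Finset Cell} {w : ℕ × ℕ} (h : w ∈ verts P) :
    ∃ c ∈ P, c.1 ≤ w.1 ∧ w.1 ≤ c.1 + 1 ∧ c.2 ≤ w.2 ∧ w.2 ≤ c.2 + 1 := by
  simp only [verts, Finset.mem_biUnion] at h
  obtain ⟨c, hcP, hcw⟩ := h
  exact ⟨c, hcP, mem_cellVerts_bounds hcw⟩

lemma adj_bounds {u v : Cell} (h : (cellVerts u ∩ cellVerts v).Nonempty) :
    u.1 ≤ v.1 + 1 ∧ v.1 ≤ u.1 + 1 ∧ u.2 ≤ v.2 + 1 ∧ v.2 ≤ u.2 + 1 := by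
  obtain ⟨w, hw⟩ := h
  rw [Finset.mem_inter] at hw
  have h1 := mem_cellVerts_bounds hw.1
  have h2 := mem_cellVerts_bounds hw.2
  omega

lemma crossing {P : Finset Cell} {j : ℕ} {a c : Cell}
    (hp : Relation.ReflTransGen
      (fun u v => u ∈ P ∧ v ∈ P ∧ (cellVerts u ∩ cellVerts v).Nonempty) a c)
    (ha : j ≤ a.2) :
    c.2 < j →
      ∃ u v : Cell, u ∈ P ∧ v ∈ P ∧ (cellVerts u ∩ cellVerts v).Nonempty ∧
        j ≤ u.2 ∧ v.2 < j := by
  induction hp with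
  | refl => intro hc; omega
  | @tail b c' hab hbc ih =>
      intro hc
      by_cases hb : j ≤ b.2
      · exact ⟨b, c', hbc.1, hbc.2.1, hbc.2.2, hb, hc⟩
      · exact ih (by omega)

lemma cover {P : Finset Cell} (hw : WeaklyConnected P) (hrow : RowConvex P)
    {a c : Cell} (haP : a ∈ P) (hcP : c ∈ P) {j : ℕ}
    (haj : a.2 ≤ j) (haj' : j ≤ a.2 + 1) (hcj : c.2 ≤ j) (hcj' : j ≤ c.2 + 1)
    {r : ℕ} (hra : a.1 ≤ r) (hrc : r ≤ c.1) :
    ∃ y, (r, y) ∈ P ∧ y ≤ j ∧ j ≤ y + 1 := by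
  by_contra hcon
  push_neg at hcon
  have hno : ∀ y : ℕ, (r, y) ∈ P → y ≤ j → ¬ (j ≤ y + 1) := fun y h1 h2 =>
    fun h3 => absurd h3 (by have := hcon y h1 h2; omega)
  -- helper: no cell (r, y) with j - 1 ≤ y ≤ j
  rcases Nat.lt_or_ge a.2 j with haj2 | haj2
  · -- a.2 + 1 = j
    rcases Nat.lt_or_ge c.2 j with hcj2 | hcj2
    · -- both in row j-1 : row convexity gives (r, a.2)
      have heq : a.2 = c.2 := by omega
      have := hrow a haP c hcP heq r hra hrc
      exact hno a.2 this (by omega) (by omega)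
    · -- a in row j-1, c in row j : crossing from c to a
      have hj : c.2 = j := by omega
      obtain ⟨u, v, huP, hvP, huv, hu2, hv2⟩ :=
        crossing (j := j) (hw c hcP a haP) (by omega) (by omega)
      have hb := adj_bounds huv
      -- u.2 = j, v.2 = j - 1 = a.2
      have hu2' : u.2 = j := by omega
      have hv2' : v.2 = a.2 := by omega
      -- u.1 > r : else row convexity between u and c gives (r, j)
      have hur : r < u.1 := by
        by_contra hle
        push_neg at hle
        have := hrow u huP c hcP (by omega) r hle hrc
        rw [hu2'] at this
        exact hno j this (le_refl j) (by omega)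
      have hvr : v.1 < r := by
        by_contra hle
        push_neg at hle
        have := hrow a haP v hvP hv2'.symm r hra hle
        exact hno a.2 this (by omega) (by omega)
      omega
  · -- a.2 = j
    have hj : a.2 = j := by omega
    rcases Nat.lt_or_ge c.2 j with hcj2 | hcj2
    · -- a in row j, c in row j-1 : crossing from a to c
      obtain ⟨u, v, huP, hvP, huv, hu2, hv2⟩ :=
        crossing (j := j) (hw a haP c hcP) (by omega) (by omega)
      have hb := adj_bounds huv
      have hu2' : u.2 = j := by omega
      have hv2' : v.2 = c.2 := by omega
      have hur : u.1 < r := by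
        by_contra hle
        push_neg at hle
        have := hrow a haP u huP (by omega) r hra hle
        rw [hj] at this
        exact hno j this (le_refl j) (by omega)
      have hvr : r < v.1 := by
        by_contra hle
        push_neg at hle
        have := hrow v hvP c hcP hv2' r hle hrc
        exact hno v.2 this (by omega) (by omega)
      omega
    · -- both in row j
      have heq : a.2 = c.2 := by omega
      have := hrow a haP c hcP heq r hra hrc
      exact hno a.2 this (by omega) (by omega)

/-- If the four corners of a proper interval belong to `V(P)` for a
weakly connected convex collection of cells `P`, then all cells of the interval belong to `P`. -/
theorem corners_in_verts_imp_inner_interval (P : Finset Cell)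
    (hw : WeaklyConnected P) (hc : IsConvexColl P)
    (g h : ℕ × ℕ) (h1 : g.1 < h.1) (h2 : g.2 < h.2)
    (hg : g ∈ verts P) (hh : h ∈ verts P)
    (hgh1 : (h.1, g.2) ∈ verts P) (hgh2 : (g.1, h.2) ∈ verts P) :
    ∀ r s : ℕ, g.1 ≤ r → r < h.1 → g.2 ≤ s → s < h.2 → (r, s) ∈ P := by
  intro r s hri hrk hsj hsl
  obtain ⟨a, haP, ha1, ha2, ha3, ha4⟩ := verts_elim hg
  obtain ⟨b, hbP, hb1, hb2, hb3, hb4⟩ := verts_elim hh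
  obtain ⟨cc, hccP, hcc1, hcc2, hcc3, hcc4⟩ := verts_elim hgh1
  obtain ⟨d, hdP, hd1, hd2, hd3, hd4⟩ := verts_elim hgh2
  simp only at hcc1 hcc2 hcc3 hcc4 hd1 hd2 hd3 hd4
  -- bottom coverage at line g.2
  obtain ⟨yb, hybP, hyb1, hyb2⟩ :=
    cover hw hc.1 haP hccP ha3 ha4 hcc3 hcc4 (le_trans ha1 hri) (by omega)
  -- top coverage at line h.2
  obtain ⟨yt, hytP, hyt1, hyt2⟩ :=
    cover hw hc.1 hdP hbP hd3 hd4 hb3 hb4 (le_trans hd1 hri) (by omega)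
  have := hc.2 (r, yb) hybP (r, yt) hytP rfl s (by omega) (by omega)
  exact this
end

section
/- Let P be a finite collection of cells and suppose the ideal I_P of inner 2-minors of P equals the toric ideal J_P = ker(φ), where φ: S → K[s_i t_j : (i,j) ∈ V(P)] sends x_{ij} to s_i t_j. Then P is convex. -/
open scoped BigOperators

/-- The toric map `φ` sending `x_{(i,j)}` to `s_i t_j`. -/
noncomputable def phiP (K : Type*) [Field K] (P : Finset Cell) :
    MvPolynomial {v : ℕ × ℕ // v ∈ verts P} K →ₐ[K] MvPolynomial (ℕ ⊕ ℕ) K :=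
  MvPolynomial.aeval fun v =>
    MvPolynomial.X (Sum.inl v.1.1) * MvPolynomial.X (Sum.inr v.1.2)

lemma key_convex {K : Type*} [Field K] {P : Finset Cell}
    (h : innerIdeal K P = RingHom.ker (phiP K P).toRingHom)
    (p q p' q' r s : ℕ)
    (hpr : p ≤ r) (hrp' : r < p') (hqs : q ≤ s) (hsq' : s < q')
    (h1 : (p, q) ∈ verts P) (h2 : (p', q') ∈ verts P)
    (h3 : (p', q) ∈ verts P) (h4 : (p, q') ∈ verts P)
    (hrs : (r, s) ∉ P) : False := by
  set f : MvPolynomial {v : ℕ × ℕ // v ∈ verts P} K :=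
    MvPolynomial.X ⟨(p, q), h1⟩ * MvPolynomial.X ⟨(p', q'), h2⟩ -
    MvPolynomial.X ⟨(p', q), h3⟩ * MvPolynomial.X ⟨(p, q'), h4⟩ with hf
  have hker : f ∈ RingHom.ker (phiP K P).toRingHom := by
    simp only [RingHom.mem_ker, AlgHom.toRingHom_eq_coe, RingHom.coe_coe, hf, map_sub,
      map_mul, phiP, MvPolynomial.aeval_X]
    ring
  rw [← h] at hker
  let ψ : MvPolynomial {v : ℕ × ℕ // v ∈ verts P} K →ₐ[K] Polynomial K :=
    MvPolynomial.aeval (fun v => if v.1.1 ≤ r ∧ v.1.2 ≤ s then Polynomial.X else 1)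
  have hgen : ∀ g ∈ innerMinors K P, ψ g = 0 := by
    rintro g ⟨a, b, c, d, ⟨hlt1, hlt2, hin⟩, hc, hd, rfl⟩
    simp only [map_sub, map_mul, MvPolynomial.aeval_X, ψ, hc, hd]
    by_cases hB1 : b.1.1 ≤ r
    · have hA1 : a.1.1 ≤ r := le_of_lt (lt_of_lt_of_le hlt1 hB1)
      by_cases hB2 : b.1.2 ≤ s
      · have hA2 : a.1.2 ≤ s := le_of_lt (lt_of_lt_of_le hlt2 hB2)
        simp [hA1, hA2, hB1, hB2]
      · simp [hA1, hB1, hB2]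
    · by_cases hB2 : b.1.2 ≤ s
      · have hA2 : a.1.2 ≤ s := le_of_lt (lt_of_lt_of_le hlt2 hB2)
        simp [hA2, hB1, hB2]
      · by_cases hA1 : a.1.1 ≤ r
        · by_cases hA2 : a.1.2 ≤ s
          · exact absurd (hin r s hA1 (not_le.1 hB1) hA2 (not_le.1 hB2)) hrs
          · simp [hA1, hA2, hB1, hB2]
        · simp [hA1, hB1, hB2]
  have hle : innerIdeal K P ≤ RingHom.ker ψ.toRingHom :=
    Ideal.span_le.mpr fun g hg => hgen g hg
  have hψf : ψ f = 0 := hle hker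
  have : (Polynomial.X : Polynomial K) * 1 - 1 * 1 = 0 := by
    have h2' : ¬ (p' ≤ r) := not_le.2 hrp'
    have h4' : ¬ (q' ≤ s) := not_le.2 hsq'
    simpa [hf, ψ, hpr, hqs, h2', h4'] using hψf
  have hX : (Polynomial.X : Polynomial K) = 1 := by linear_combination this
  have := Polynomial.natDegree_X (R := K)
  rw [hX] at this
  simp at this

lemma mem_verts_of_mem {P : Finset Cell} {a : Cell} (ha : a ∈ P) {v : ℕ × ℕ}
    (hv : v ∈ cellVerts a) : v ∈ verts P :=
  Finset.mem_biUnion.2 ⟨a, ha, hv⟩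

/-- If `I_P` equals the toric ideal `J_P = ker φ`, then `P` is convex. -/
theorem convex_of_innerIdeal_eq_toric (K : Type*) [Field K] (P : Finset Cell)
    (h : innerIdeal K P = RingHom.ker (phiP K P).toRingHom) :
    IsConvexColl P := by
  constructor
  · intro a ha b hb hj r hr1 hr2
    by_contra hrs
    exact key_convex h a.1 a.2 (b.1 + 1) (a.2 + 1) r a.2 hr1
      (Nat.lt_succ_of_le hr2) le_rfl (Nat.lt_succ_self _)
      (mem_verts_of_mem ha (by simp [cellVerts]))
      (mem_verts_of_mem hb (by simp [cellVerts, hj]))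
      (mem_verts_of_mem hb (by simp [cellVerts, hj]))
      (mem_verts_of_mem ha (by simp [cellVerts])) hrs
  · intro a ha b hb hi s hs1 hs2
    by_contra hrs
    exact key_convex h a.1 a.2 (a.1 + 1) (b.2 + 1) a.1 s le_rfl
      (Nat.lt_succ_self _) hs1 (Nat.lt_succ_of_le hs2)
      (mem_verts_of_mem ha (by simp [cellVerts]))
      (mem_verts_of_mem hb (by simp [cellVerts, hi]))
      (mem_verts_of_mem ha (by simp [cellVerts]))
      (mem_verts_of_mem hb (by simp [cellVerts, hi])) hrs
end

section
/- Let P be a finite collection of cells, ψ: S → T the K-algebra map to the Laurent polynomial ring T = K[y_c^{±1} : c ∈ F(P)] defined recursively by ψ(x_a) = y_a for free vertices a, and ψ(x_a) = ψ(x_b)ψ(x_c)ψ(x_d)^{−1} when a is the lower left corner of a cell with other vertices b, c, d. If [a,b] is an inner interval of P with anti-diagonal corners c and d, then ψ(x_a)ψ(x_b) = ψ(x_c)ψ(x_d). -/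
open scoped BigOperators

/-- A vertex of `P` is free if it is not the lower left corner of any cell of `P`. -/
def freeVert (P : Finset Cell) (v : ℕ × ℕ) : Prop := v ∈ verts P ∧ v ∉ P

/-- The Laurent polynomial ring in the variables `y_c`, `c` a free vertex of `P`. -/
abbrev LaurentRing (K : Type*) [Field K] (P : Finset Cell) : Type _ :=
  AddMonoidAlgebra K ({v : ℕ × ℕ // freeVert P v} →₀ ℤ)

/-- `ψ` is the natural map `S → T`: it sends `x_a` to `y_a` for free vertices `a`, and
satisfies `ψ(x_a) ψ(x_d) = ψ(x_b) ψ(x_c)` whenever `a` is the lower left corner of a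
cell of `P` with remaining vertices `b, c, d` (equivalently `ψ(x_a)=ψ(x_b)ψ(x_c)ψ(x_d)⁻¹`).
These two conditions determine `ψ` uniquely. -/
def psiSpec (K : Type*) [Field K] (P : Finset Cell)
    (ψ : MvPolynomial {v : ℕ × ℕ // v ∈ verts P} K →ₐ[K] LaurentRing K P) : Prop :=
  (∀ v : {v : ℕ × ℕ // v ∈ verts P}, ∀ h : freeVert P v.1,
      ψ (MvPolynomial.X v) = AddMonoidAlgebra.of' K _ (Finsupp.single ⟨v.1, h⟩ 1)) ∧
  (∀ a b c d : {v : ℕ × ℕ // v ∈ verts P}, a.1 ∈ P →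
      b.1 = (a.1.1 + 1, a.1.2) → c.1 = (a.1.1, a.1.2 + 1) → d.1 = (a.1.1 + 1, a.1.2 + 1) →
      ψ (MvPolynomial.X a) * ψ (MvPolynomial.X d) =
        ψ (MvPolynomial.X b) * ψ (MvPolynomial.X c))

lemma corner_mem_verts {P : Finset Cell} {c : Cell} (hc : c ∈ P) {v : ℕ × ℕ}
    (hv : v ∈ cellVerts c) : v ∈ verts P := Finset.mem_biUnion.mpr ⟨c, hc, hv⟩

lemma mem_cellVerts_self (c : Cell) : c ∈ cellVerts c := by simp [cellVerts]
lemma mem_cellVerts_right (c : Cell) : (c.1 + 1, c.2) ∈ cellVerts c := by simp [cellVerts]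
lemma mem_cellVerts_up (c : Cell) : (c.1, c.2 + 1) ∈ cellVerts c := by simp [cellVerts]
lemma mem_cellVerts_diag (c : Cell) : (c.1 + 1, c.2 + 1) ∈ cellVerts c := by simp [cellVerts]

lemma psi_ne_zero (K : Type*) [Field K] (P : Finset Cell)
    (ψ : MvPolynomial {v : ℕ × ℕ // v ∈ verts P} K →ₐ[K] LaurentRing K P)
    (hψ : psiSpec K P ψ) (v : {v : ℕ × ℕ // v ∈ verts P}) :
    ψ (MvPolynomial.X v) ≠ 0 := by
  set B := (verts P).sup (fun v => v.1 + v.2) with hB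
  suffices h : ∀ fuel : ℕ, ∀ v : {v : ℕ × ℕ // v ∈ verts P},
      B < v.1.1 + v.1.2 + fuel → ψ (MvPolynomial.X v) ≠ 0 by
    exact h (B + 1) v (by omega)
  intro fuel
  induction fuel with
  | zero =>
    intro v hv
    have : v.1.1 + v.1.2 ≤ B := Finset.le_sup (f := fun v => v.1 + v.2) v.2
    omega
  | succ n ih =>
    intro v hv
    by_cases hvP : v.1 ∈ P
    · -- use the cell relation
      have hb : ((v.1.1 + 1, v.1.2) : ℕ × ℕ) ∈ verts P :=
        corner_mem_verts hvP (mem_cellVerts_right v.1)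
      have hc : ((v.1.1, v.1.2 + 1) : ℕ × ℕ) ∈ verts P :=
        corner_mem_verts hvP (mem_cellVerts_up v.1)
      have hd : ((v.1.1 + 1, v.1.2 + 1) : ℕ × ℕ) ∈ verts P :=
        corner_mem_verts hvP (mem_cellVerts_diag v.1)
      have := hψ.2 v ⟨_, hb⟩ ⟨_, hc⟩ ⟨_, hd⟩ hvP rfl rfl rfl
      have hbne : ψ (MvPolynomial.X (⟨_, hb⟩ : {v : ℕ × ℕ // v ∈ verts P})) ≠ 0 :=
        ih ⟨_, hb⟩ (by simp; omega)
      have hcne : ψ (MvPolynomial.X (⟨_, hc⟩ : {v : ℕ × ℕ // v ∈ verts P})) ≠ 0 :=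
        ih ⟨_, hc⟩ (by simp; omega)
      intro h0
      rw [h0, zero_mul] at this
      exact mul_ne_zero hbne hcne this.symm
    · have hfree : freeVert P v.1 := ⟨v.2, hvP⟩
      rw [hψ.1 v hfree]
      simp [AddMonoidAlgebra.of']

lemma psi_key (K : Type*) [Field K] (P : Finset Cell)
    (ψ : MvPolynomial {v : ℕ × ℕ // v ∈ verts P} K →ₐ[K] LaurentRing K P)
    (hψ : psiSpec K P ψ) :
    ∀ n i j k l : ℕ, k + l ≤ i + j + n → i < k → j < l →
      (∀ r s : ℕ, i ≤ r → r < k → j ≤ s → s < l → ((r, s) : Cell) ∈ P) →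
      ∀ (ha : ((i, j) : ℕ × ℕ) ∈ verts P) (hb : ((k, l) : ℕ × ℕ) ∈ verts P)
        (hc : ((k, j) : ℕ × ℕ) ∈ verts P) (hd : ((i, l) : ℕ × ℕ) ∈ verts P),
      ψ (MvPolynomial.X ⟨(i, j), ha⟩) * ψ (MvPolynomial.X ⟨(k, l), hb⟩) =
        ψ (MvPolynomial.X ⟨(k, j), hc⟩) * ψ (MvPolynomial.X ⟨(i, l), hd⟩) := by
  intro n
  induction n with
  | zero => intro i j k l h hik hjl; omega
  | succ n ih =>
    intro i j k l hn hik hjl hP ha hb hc hd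
    by_cases hk : k = i + 1
    · by_cases hl : l = j + 1
      · -- single cell
        subst hk hl
        have hcell : ((i, j) : Cell) ∈ P := hP i j le_rfl (by omega) le_rfl (by omega)
        exact hψ.2 ⟨(i, j), ha⟩ ⟨(i + 1, j), hc⟩ ⟨(i, j + 1), hd⟩ ⟨(i + 1, j + 1), hb⟩
          hcell rfl rfl rfl
      · -- split horizontally at m = j+1
        have hjl' : j + 1 < l := by omega
        set m := j + 1 with hm
        have hkm : ((k, m) : ℕ × ℕ) ∈ verts P :=
          corner_mem_verts (hP (k - 1) j (by omega) (by omega) le_rfl (by omega))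
            (by have : ((k, m) : ℕ × ℕ) = ((k - 1 : ℕ) + 1, j + 1) := by simp [hm]; omega
                rw [this]; exact mem_cellVerts_diag (k - 1, j))
        have him : ((i, m) : ℕ × ℕ) ∈ verts P :=
          corner_mem_verts (hP i j le_rfl (by omega) le_rfl (by omega))
            (mem_cellVerts_up (i, j))
        have E1 := ih i j k m (by omega) hik (by omega)
          (fun r s h1 h2 h3 h4 => hP r s h1 h2 h3 (by omega)) ha hkm hc him
        have E2 := ih i m k l (by omega) hik (by omega)
          (fun r s h1 h2 h3 h4 => hP r s h1 h2 (by omega) h4) him hb hkm hd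
        have h1 : ψ (MvPolynomial.X (⟨(i, m), him⟩ : {v : ℕ × ℕ // v ∈ verts P})) ≠ 0 :=
          psi_ne_zero K P ψ hψ _
        have h2 : ψ (MvPolynomial.X (⟨(k, m), hkm⟩ : {v : ℕ × ℕ // v ∈ verts P})) ≠ 0 :=
          psi_ne_zero K P ψ hψ _
        apply mul_left_cancel₀ (mul_ne_zero h1 h2)
        linear_combination (ψ (MvPolynomial.X (⟨(i, m), him⟩ : {v : ℕ × ℕ // v ∈ verts P})) *
            ψ (MvPolynomial.X ⟨(k, l), hb⟩)) * E1 +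
          (ψ (MvPolynomial.X (⟨(i, m), him⟩ : {v : ℕ × ℕ // v ∈ verts P})) *
            ψ (MvPolynomial.X ⟨(k, j), hc⟩)) * E2
    · -- split vertically at m = i+1
      have hik' : i + 1 < k := by omega
      set m := i + 1 with hm
      have hml : ((m, l) : ℕ × ℕ) ∈ verts P :=
        corner_mem_verts (hP i (l - 1) le_rfl (by omega) (by omega) (by omega))
          (by have : ((m, l) : ℕ × ℕ) = (i + 1, (l - 1 : ℕ) + 1) := by simp [hm]; omega
              rw [this]; exact mem_cellVerts_diag (i, l - 1))
      have hmj : ((m, j) : ℕ × ℕ) ∈ verts P :=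
        corner_mem_verts (hP i j le_rfl (by omega) le_rfl (by omega))
          (mem_cellVerts_right (i, j))
      have E1 := ih i j m l (by omega) (by omega) hjl
        (fun r s h1 h2 h3 h4 => hP r s h1 (by omega) h3 h4) ha hml hmj hd
      have E2 := ih m j k l (by omega) (by omega) hjl
        (fun r s h1 h2 h3 h4 => hP r s (by omega) h2 h3 h4) hmj hb hc hml
      have h1 : ψ (MvPolynomial.X (⟨(m, j), hmj⟩ : {v : ℕ × ℕ // v ∈ verts P})) ≠ 0 :=
        psi_ne_zero K P ψ hψ _
      have h2 : ψ (MvPolynomial.X (⟨(m, l), hml⟩ : {v : ℕ × ℕ // v ∈ verts P})) ≠ 0 :=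
        psi_ne_zero K P ψ hψ _
      apply mul_left_cancel₀ (mul_ne_zero h1 h2)
      linear_combination (ψ (MvPolynomial.X (⟨(m, j), hmj⟩ : {v : ℕ × ℕ // v ∈ verts P})) *
          ψ (MvPolynomial.X ⟨(k, l), hb⟩)) * E1 +
        (ψ (MvPolynomial.X (⟨(m, j), hmj⟩ : {v : ℕ × ℕ // v ∈ verts P})) *
          ψ (MvPolynomial.X ⟨(i, l), hd⟩)) * E2

/-- If `[a,b]` is an inner interval of `P` with anti-diagonal corners
`c` and `d`, then `ψ(x_a) ψ(x_b) = ψ(x_c) ψ(x_d)`. -/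
theorem psi_inner_interval (K : Type*) [Field K] (P : Finset Cell)
    (ψ : MvPolynomial {v : ℕ × ℕ // v ∈ verts P} K →ₐ[K] LaurentRing K P)
    (hψ : psiSpec K P ψ)
    (a b c d : {v : ℕ × ℕ // v ∈ verts P})
    (hab : InnerInterval P a.1 b.1)
    (hc : c.1 = (b.1.1, a.1.2)) (hd : d.1 = (a.1.1, b.1.2)) :
    ψ (MvPolynomial.X a) * ψ (MvPolynomial.X b) =
      ψ (MvPolynomial.X c) * ψ (MvPolynomial.X d) := by
  
  obtain ⟨⟨i, j⟩, hav⟩ := a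
  obtain ⟨⟨k, l⟩, hbv⟩ := b
  obtain ⟨⟨c1, c2⟩, hcv⟩ := c
  obtain ⟨⟨d1, d2⟩, hdv⟩ := d
  obtain ⟨rfl, rfl⟩ : k = c1 ∧ j = c2 := by simpa [eq_comm] using hc
  obtain ⟨rfl, rfl⟩ : i = d1 ∧ l = d2 := by simpa [eq_comm] using hd
  exact psi_key K P ψ hψ (k + l) i j k l (by omega) hab.1 hab.2.1
    (fun r s h1 h2 h3 h4 => hab.2.2 r s h1 h2 h3 h4) hav hbv hcv hdv
end

section
/- Let P be a finite collection of cells and L_P = ker ψ where ψ: S → T is the natural map to the toric (Laurent) ring in the free-vertex variables. If a binomial f_{a,b} = x_a x_b − x_c x_d attached to a proper interval [a,b] with anti-diagonal corners c, d lies in L_P, then [a,b] is an inner interval of P. -/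
open scoped BigOperators

/-!
If a cell `(r, s)` of `[a, b]` were missing from `P`, the indicator `W` of the open quadrant
above and to the right of `(r, s)` would satisfy
`W p + W (p + (1,1)) = W (p + (1,0)) + W (p + (0,1))` at every cell `p` of `P`. The cell
relations determine `ψ (x_v)` from the values at free vertices, so composing `ψ` with the
specialisation `y_v ↦ t ^ W v` gives `x_v ↦ t ^ W v`. Applied to `f_{a,b} ∈ ker ψ` this
yields `W a + W b = W c + W d`, whereas the left side is `1` and the right side `0`.
-/

open MvPolynomial AddMonoidAlgebra

lemma mem_verts_of_mem_cellVerts {P : Finset Cell} {p : Cell} (hp : p ∈ P) {v : ℕ × ℕ}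
    (hv : v ∈ cellVerts p) : v ∈ verts P :=
  Finset.mem_biUnion.2 ⟨p, hp, hv⟩

section CellRelations

variable {M : Type*} [CommMonoid M] {P : Finset Cell}

def CellRelations (P : Finset Cell) (f : {v : ℕ × ℕ // v ∈ verts P} → M) : Prop :=
  ∀ a b c d : {v : ℕ × ℕ // v ∈ verts P}, a.1 ∈ P →
    b.1 = (a.1.1 + 1, a.1.2) → c.1 = (a.1.1, a.1.2 + 1) → d.1 = (a.1.1 + 1, a.1.2 + 1) →
    f a * f d = f b * f c

theorem CellRelations.map {N : Type*} [CommMonoid N] {f : {v : ℕ × ℕ // v ∈ verts P} → M}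
    (hf : CellRelations P f) (φ : M →* N) : CellRelations P (φ ∘ f) :=
  fun a b c d ha hb hc hd => by simp only [Function.comp_apply, ← map_mul, hf a b c d ha hb hc hd]

/-- Descending induction on `v.1 + v.2`: the relation at the cell `v` expresses the value at
`v` through the values at its three other corners, all further up and to the right. -/
theorem CellRelations.eq_of_forall_free {f g : {v : ℕ × ℕ // v ∈ verts P} → M}
    (hf : CellRelations P f) (hg : CellRelations P g) (hunit : ∀ v, IsUnit (g v))
    (hfree : ∀ v, v.1 ∉ P → f v = g v) : f = g := by
  set N := (verts P).sup fun v => v.1 + v.2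
  suffices ∀ k, ∀ v : verts P, N - (v.1.1 + v.1.2) = k → f v = g v from
    funext fun v => this _ v rfl
  intro k
  induction k using Nat.strong_induction_on with
  | _ k ih =>
    rintro v rfl
    by_cases hvP : v.1 ∈ P
    · have hb := mem_verts_of_mem_cellVerts hvP (v := (v.1.1 + 1, v.1.2)) (by simp [cellVerts])
      have hc := mem_verts_of_mem_cellVerts hvP (v := (v.1.1, v.1.2 + 1)) (by simp [cellVerts])
      have hd := mem_verts_of_mem_cellVerts hvP (v := (v.1.1 + 1, v.1.2 + 1)) (by simp [cellVerts])
      have hN : v.1.1 + 1 + (v.1.2 + 1) ≤ N := Finset.le_sup (f := fun v => v.1 + v.2) hd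
      have hrel := hf v ⟨_, hb⟩ ⟨_, hc⟩ ⟨_, hd⟩ hvP rfl rfl rfl
      rw [ih (N - (v.1.1 + 1 + v.1.2)) (by omega) ⟨_, hb⟩ rfl,
        ih (N - (v.1.1 + (v.1.2 + 1))) (by omega) ⟨_, hc⟩ rfl,
        ih (N - (v.1.1 + 1 + (v.1.2 + 1))) (by omega) ⟨_, hd⟩ rfl,
        ← hg v ⟨_, hb⟩ ⟨_, hc⟩ ⟨_, hd⟩ hvP rfl rfl rfl] at hrel
      exact (hunit _).mul_left_inj.1 hrel
    · exact hfree v hvP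

end CellRelations

theorem psiSpec.cellRelations {K : Type*} [Field K] {P : Finset Cell}
    {ψ : MvPolynomial {v : ℕ × ℕ // v ∈ verts P} K →ₐ[K] LaurentRing K P}
    (hψ : psiSpec K P ψ) :
    CellRelations P fun v => ψ (X v) :=
  hψ.2

/-- The specialisation `y_v ↦ t ^ W v` of the Laurent ring to `K[t, t⁻¹]`. -/
noncomputable def weightHom (K : Type*) [Field K] (P : Finset Cell) (W : ℕ × ℕ → ℤ) :
    LaurentRing K P →ₐ[K] AddMonoidAlgebra K ℤ :=
  mapDomainAlgHom K K (Finsupp.liftAddHom fun v => AddMonoidHom.mulRight (W v.1))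

theorem weightHom_of' {K : Type*} [Field K] {P : Finset Cell} (W : ℕ × ℕ → ℤ)
    (v : {v : ℕ × ℕ // freeVert P v}) :
    weightHom K P W (of' K _ (Finsupp.single v 1)) = of' K ℤ (W v.1) := by
  simp [weightHom, of'_apply, mapDomain_single]

theorem weight_eq_of_mem_ker {K : Type*} [Field K] {P : Finset Cell}
    {ψ : MvPolynomial {v : ℕ × ℕ // v ∈ verts P} K →ₐ[K] LaurentRing K P}
    (hψ : psiSpec K P ψ)
    (W : ℕ × ℕ → ℤ)
    (hW : ∀ p ∈ P, W p + W (p.1 + 1, p.2 + 1) = W (p.1 + 1, p.2) + W (p.1, p.2 + 1))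
    {a b c d : {v : ℕ × ℕ // v ∈ verts P}}
    (hker : X a * X b - X c * X d ∈ RingHom.ker ψ.toRingHom) :
    W a.1 + W b.1 = W c.1 + W d.1 := by
  set Φ := weightHom K P W
  let g : {v : ℕ × ℕ // v ∈ verts P} → AddMonoidAlgebra K ℤ := fun v => of' K ℤ (W v.1)
  have hg : CellRelations P g := fun p b c d hp hb hc hd => by
    simp only [g, of'_eq_of, ← map_mul, ← ofAdd_add, hb, hc, hd, hW p.1 hp]
  have hΦψ : (fun v => Φ (ψ (X v))) = g := by
    refine (hψ.cellRelations.map Φ.toMonoidHom).eq_of_forall_free hg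
      (fun v => (Group.isUnit (Multiplicative.ofAdd (W v.1))).map (of K ℤ)) fun v hv => ?_
    rw [Function.comp_apply, hψ.1 v ⟨v.2, hv⟩]
    exact weightHom_of' W _
  have hker' : ψ (X a) * ψ (X b) = ψ (X c) * ψ (X d) := by
    simpa [sub_eq_zero] using hker
  have hg_eq : g a * g b = g c * g d := by
    simpa only [map_mul, congrFun hΦψ _] using congrArg Φ hker'
  simp only [g, of'_eq_of, ← map_mul, ← ofAdd_add] at hg_eq
  exact of_injective hg_eq

def quadrantIndicator (r s : ℕ) (v : ℕ × ℕ) : ℤ := if r < v.1 ∧ s < v.2 then 1 else 0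

theorem quadrantIndicator_cell_relation {r s : ℕ} {p : ℕ × ℕ} (hp : p ≠ (r, s)) :
    quadrantIndicator r s p + quadrantIndicator r s (p.1 + 1, p.2 + 1) =
      quadrantIndicator r s (p.1 + 1, p.2) + quadrantIndicator r s (p.1, p.2 + 1) := by
  rw [Ne, Prod.ext_iff] at hp
  unfold quadrantIndicator
  split_ifs <;> omega

/-- If the binomial `f_{a,b} = x_a x_b - x_c x_d` attached to a proper
interval `[a,b]` lies in `L_P = ker ψ`, then `[a,b]` is an inner interval of `P`. -/
theorem inner_interval_of_mem_LP (K : Type*) [Field K] (P : Finset Cell)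
    (ψ : MvPolynomial {v : ℕ × ℕ // v ∈ verts P} K →ₐ[K] LaurentRing K P)
    (hψ : psiSpec K P ψ)
    (a b c d : {v : ℕ × ℕ // v ∈ verts P})
    (h1 : a.1.1 < b.1.1) (h2 : a.1.2 < b.1.2)
    (hc : c.1 = (b.1.1, a.1.2)) (hd : d.1 = (a.1.1, b.1.2))
    (hker : MvPolynomial.X a * MvPolynomial.X b - MvPolynomial.X c * MvPolynomial.X d ∈
      RingHom.ker ψ.toRingHom) :
    InnerInterval P a.1 b.1 := by
  refine ⟨h1, h2, fun r s hra hrb hsa hsb => ?_⟩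
  by_contra hrs
  have hW := weight_eq_of_mem_ker hψ (quadrantIndicator r s)
    (fun p hp => quadrantIndicator_cell_relation (ne_of_mem_of_not_mem hp hrs)) hker
  rw [hc, hd] at hW
  unfold quadrantIndicator at hW
  split_ifs at hW <;> omega
end

section
/- Let P be a finite collection of cells. Then the degree-2 graded components of the inner 2-minor ideal I_P and of the lattice ideal L_P = ker ψ coincide: (I_P)₂ = (L_P)₂. -/
open scoped BigOperators

/-!
`ψ` sends each variable `x_v` to a Laurent monomial `y ^ m(v)`. The exponent map `m` is the
identity on free vertices and cell-harmonic: `m(a) + m(d) = m(b) + m(c)` for every cell with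
corners `a, b, c, d` as in `psiSpec`. Summing this relation over the cells of an inner interval shows that `ψ`
kills the inner 2-minors.

Conversely, the kernel of a monomial map is spanned by the binomials `x^d - x^d'` with equal
images, so in degree 2 it suffices to treat `x_u x_v - x_u' x_v'` with
`m(u) + m(v) = m(u') + m(v')`. A cell-harmonic function is determined through `m` by its values
on the free vertices, so `g(u) + g(v) = g(u') + g(v')` for every cell-harmonic `g`. Testing this
with the column and row counters shows that `u', v'` are the other two corners of the rectangle
spanned by `u, v`; testing it with the indicator of the quadrant below a cell `c ∉ P`, which is
harmonic on every cell other than `c`, shows that all cells of that rectangle lie in `P`.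
-/

lemma Finsupp.exists_eq_single_add_single_of_degree_eq_two {σ : Type*} {d : σ →₀ ℕ}
    (hd : d.degree = 2) : ∃ u v : σ, d = single u 1 + single v 1 := by
  classical
  have hcard : Multiset.card (toMultiset d) = 2 := by
    rw [card_toMultiset]
    exact hd
  obtain ⟨u, v, huv⟩ := Multiset.card_eq_two.mp hcard
  refine ⟨u, v, ?_⟩
  rw [toMultiset_eq_iff.mp huv, show ({u, v} : Multiset σ) = {u} + {v} from rfl, map_add,
    Multiset.toFinsupp_singleton, Multiset.toFinsupp_singleton]

namespace MvPolynomial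

variable {R σ : Type*} [CommRing R]

lemma monomial_single_add_single (u v : σ) :
    monomial (Finsupp.single u 1 + Finsupp.single v 1) (1 : R) = X u * X v := by
  rw [X, X, monomial_mul, one_mul]

theorem mem_ideal_of_mapDomain_eq_zero {G : Type*} (M : (σ →₀ ℕ) → G)
    {I : Ideal (MvPolynomial σ R)} {f : MvPolynomial σ R}
    (hI : ∀ d ∈ f.support, ∀ d' ∈ f.support, M d = M d' →
      monomial d (1 : R) - monomial d' 1 ∈ I)
    (hf : AddMonoidAlgebra.mapDomain M f = 0) : f ∈ I := by
  classical
  set ρ := Function.invFunOn M (f.support : Set (σ →₀ ℕ))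
  have hρ : ∀ d ∈ f.support, ρ (M d) ∈ f.support ∧ M (ρ (M d)) = M d := fun d hd =>
    ⟨Function.invFunOn_mem ⟨d, hd, rfl⟩, Function.invFunOn_eq ⟨d, hd, rfl⟩⟩
  have hfiber : ∀ d ∈ f.support, ∑ d' ∈ f.support with M d' = M d, coeff d' f = 0 := by
    intro d _
    have := congrArg (fun x => x.coeff (M d)) hf
    simp only [AddMonoidAlgebra.coeff_mapDomain, Finsupp.mapDomain_apply_eq_sum,
      AddMonoidAlgebra.coeff_zero, Finsupp.coe_zero, Pi.zero_apply] at this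
    exact this
  have hrep : ∑ d ∈ f.support, monomial (ρ (M d)) (coeff d f) = 0 := by
    rw [← Finset.sum_fiberwise_of_maps_to fun d hd => Finset.mem_image_of_mem M hd]
    refine Finset.sum_eq_zero fun g hg => ?_
    obtain ⟨d, hd, rfl⟩ := Finset.mem_image.1 hg
    rw [Finset.sum_congr rfl fun d' hd' => by rw [(Finset.mem_filter.1 hd').2], ← map_sum,
      hfiber d hd, map_zero]
  have hsum : ∑ d ∈ f.support, coeff d f • (monomial d 1 - monomial (ρ (M d)) 1) = f := by
    simp only [smul_sub, smul_monomial, smul_eq_mul, mul_one, Finset.sum_sub_distrib, hrep,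
      sub_zero]
    exact support_sum_monomial_coeff f
  rw [← hsum]
  exact Ideal.sum_mem _ fun d hd =>
    Submodule.smul_of_tower_mem _ _ (hI d hd _ (hρ d hd).1 (hρ d hd).2.symm)

theorem algHom_apply_eq_mapDomain {G : Type*} [AddCommMonoid G] (e : σ → G)
    (φ : MvPolynomial σ R →ₐ[R] AddMonoidAlgebra R G)
    (hφ : ∀ v, φ (X v) = AddMonoidAlgebra.single (e v) 1) (f : MvPolynomial σ R) :
    φ f = AddMonoidAlgebra.mapDomain (Finsupp.linearCombination ℕ e) f := by
  have :
      φ = AddMonoidAlgebra.mapDomainAlgHom R R (Finsupp.linearCombination ℕ e).toAddMonoidHom :=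
    algHom_ext fun v => by
      rw [hφ, AddMonoidAlgebra.mapDomainAlgHom_apply, X, monomial, AddMonoidAlgebra.lsingle_apply,
        AddMonoidAlgebra.mapDomain_single]
      simp
  rw [this]
  rfl

end MvPolynomial

namespace CellCollection

open MvPolynomial

abbrev Vertex (P : Finset Cell) := {v : ℕ × ℕ // v ∈ verts P}

abbrev FreeVertex (P : Finset Cell) := {v : ℕ × ℕ // freeVert P v}

variable {P : Finset Cell}

lemma cellVerts_subset_verts {p : Cell} (hp : p ∈ P) : cellVerts p ⊆ verts P :=
  Finset.subset_biUnion_of_mem cellVerts hp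

theorem verts_induction {Q : ℕ × ℕ → Prop}
    (free : ∀ v, freeVert P v → Q v)
    (cell : ∀ p ∈ P, Q (p.1 + 1, p.2) → Q (p.1, p.2 + 1) → Q (p.1 + 1, p.2 + 1) → Q p) :
    ∀ v ∈ verts P, Q v := by
  set B := (verts P).sup fun w => w.1 + w.2
  intro v hv
  induction hn : B - (v.1 + v.2) using Nat.strong_induction_on generalizing v with
  | _ n ih =>
  by_cases hvP : v ∈ P
  · have corner : ∀ w ∈ cellVerts v, v.1 + v.2 < w.1 + w.2 → Q w := fun w hw hlt => by
      have hwV := cellVerts_subset_verts hvP hw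
      have := Finset.le_sup (f := fun w : ℕ × ℕ => w.1 + w.2) hwV
      exact ih _ (by omega) w hwV rfl
    exact cell v hvP (corner _ (by simp [cellVerts]) (by omega))
      (corner _ (by simp [cellVerts]) (by omega)) (corner _ (by simp [cellVerts]) (by omega))
  · exact free v ⟨hv, hvP⟩

lemma minor_mem_innerIdeal (K : Type*) [Field K] {a b c d : Vertex P}
    (hab : InnerInterval P a b) (hc : c.1 = (b.1.1, a.1.2)) (hd : d.1 = (a.1.1, b.1.2)) :
    (X a * X b - X c * X d : MvPolynomial (Vertex P) K) ∈ innerIdeal K P :=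
  Ideal.subset_span ⟨a, b, c, d, hab, hc, hd, rfl⟩

section Harmonic

variable {A : Type*} [AddCommGroup A] {g : ℕ × ℕ → A}

def IsCellHarmonic (P : Finset Cell) (g : ℕ × ℕ → A) : Prop :=
  ∀ p ∈ P, g p + g (p.1 + 1, p.2 + 1) = g (p.1 + 1, p.2) + g (p.1, p.2 + 1)

lemma IsCellHarmonic.add_corners_column (hg : IsCellHarmonic P g) {r s t : ℕ}
    (hst : s ≤ t) (hcol : ∀ j, s ≤ j → j < t → (r, j) ∈ P) :
    g (r, s) + g (r + 1, t) = g (r + 1, s) + g (r, t) := by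
  induction t, hst using Nat.le_induction with
  | base => exact add_comm _ _
  | succ t hst ih =>
    have hcell := hg (r, t) (hcol t hst t.lt_succ_self)
    linear_combination (norm := abel) ih (fun j hj hjt => hcol j hj (by omega)) + hcell

lemma IsCellHarmonic.add_corners (hg : IsCellHarmonic P g) {a b : ℕ × ℕ}
    (h₁ : a.1 ≤ b.1) (h₂ : a.2 ≤ b.2)
    (hbox : ∀ r s : ℕ, a.1 ≤ r → r < b.1 → a.2 ≤ s → s < b.2 → (r, s) ∈ P) :
    g a + g b = g (b.1, a.2) + g (a.1, b.2) := by
  obtain ⟨a₁, a₂⟩ := a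
  obtain ⟨b₁, b₂⟩ := b
  dsimp only at *
  induction b₁, h₁ using Nat.le_induction with
  | base => rfl
  | succ r hr ih =>
    have hcol := hg.add_corners_column h₂ fun j hj hjt => hbox r j hr r.lt_succ_self hj hjt
    linear_combination (norm := abel)
      ih (fun i j hi hir hj hjt => hbox i j hi (by omega) hj hjt) + hcol

lemma isCellHarmonic_single_fst (P : Finset Cell) :
    IsCellHarmonic P fun w : ℕ × ℕ => Finsupp.single w.1 (1 : ℤ) :=
  fun _ _ => add_comm _ _

lemma isCellHarmonic_single_snd (P : Finset Cell) :
    IsCellHarmonic P fun w : ℕ × ℕ => Finsupp.single w.2 (1 : ℤ) :=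
  fun _ _ => rfl

def lowerIndicator (c w : ℕ × ℕ) : ℤ := if w.1 ≤ c.1 ∧ w.2 ≤ c.2 then 1 else 0

lemma isCellHarmonic_lowerIndicator {c : ℕ × ℕ} (hc : c ∉ P) :
    IsCellHarmonic P (lowerIndicator c) := by
  intro p hp
  have hpc : p.1 ≠ c.1 ∨ p.2 ≠ c.2 := by
    by_contra! h
    exact hc (Prod.ext h.1 h.2 ▸ hp)
  unfold lowerIndicator
  split_ifs <;> omega

end Harmonic

def IsExponentMap (P : Finset Cell) (m : ℕ × ℕ → (FreeVertex P →₀ ℤ)) : Prop :=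
  IsCellHarmonic P m ∧ ∀ v (hv : freeVert P v), m v = Finsupp.single ⟨v, hv⟩ 1

namespace IsExponentMap

variable {m : ℕ × ℕ → (FreeVertex P →₀ ℤ)}

lemma eq_linearCombination (hm : IsExponentMap P m) {A : Type*} [AddCommGroup A]
    {g : ℕ × ℕ → A} (hg : IsCellHarmonic P g) :
    ∀ v ∈ verts P,
      g v = Finsupp.linearCombination ℤ (fun f : FreeVertex P => g f.1) (m v) := by
  refine verts_induction (fun v hv => ?_) (fun p hp hb hc hd => ?_)
  · rw [hm.2 v hv, Finsupp.linearCombination_single, one_smul]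
  · have := congrArg (Finsupp.linearCombination ℤ fun f : FreeVertex P => g f.1) (hm.1 p hp)
    rw [map_add, map_add, ← hb, ← hc, ← hd, ← hg p hp] at this
    exact (add_right_cancel this).symm

lemma add_eq_add_of_isCellHarmonic (hm : IsExponentMap P m) {A : Type*} [AddCommGroup A]
    {g : ℕ × ℕ → A} (hg : IsCellHarmonic P g) {a b c d : Vertex P}
    (h : m a + m b = m c + m d) :
    g a + g b = g c + g d := by
  simp only [hm.eq_linearCombination hg _ (Subtype.prop _), ← map_add, h]

lemma innerInterval (hm : IsExponentMap P m) {a b c d : Vertex P}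
    (h₁ : a.1.1 < b.1.1) (h₂ : a.1.2 < b.1.2)
    (hc : c.1 = (b.1.1, a.1.2)) (hd : d.1 = (a.1.1, b.1.2)) (h : m a + m b = m c + m d) :
    InnerInterval P a b := by
  refine ⟨h₁, h₂, fun r s har hrb has hsb => ?_⟩
  by_contra hrs
  have := hm.add_eq_add_of_isCellHarmonic (isCellHarmonic_lowerIndicator hrs) h
  rw [hc, hd] at this
  simp only [lowerIndicator] at this
  split_ifs at this <;> omega

lemma X_mul_X_sub_X_mul_X_mem_innerIdeal_of_corners (hm : IsExponentMap P m) (K : Type*)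
    [Field K] {u v u' v' : Vertex P} (h₁ : u.1.1 < v.1.1)
    (hu' : u'.1 = (u.1.1, v.1.2)) (hv' : v'.1 = (v.1.1, u.1.2)) (h : m u + m v = m u' + m v') :
    (X u * X v - X u' * X v' : MvPolynomial (Vertex P) K) ∈ innerIdeal K P := by
  rcases lt_trichotomy u.1.2 v.1.2 with h₂ | h₂ | h₂
  · have hI :=
      minor_mem_innerIdeal K (hm.innerInterval h₁ h₂ hv' hu' (by rw [h, add_comm])) hv' hu'
    rwa [mul_comm (X u')]
  · obtain rfl : u' = u := Subtype.ext (hu'.trans (Prod.ext rfl h₂.symm))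
    obtain rfl : v' = v := Subtype.ext (hv'.trans (Prod.ext rfl h₂))
    rw [sub_self]
    exact zero_mem _
  · have hv : v.1 = (v'.1.1, u'.1.2) := by rw [hu', hv']
    have hu : u.1 = (u'.1.1, v'.1.2) := by rw [hu', hv']
    have hI := minor_mem_innerIdeal K (hm.innerInterval (by rw [hu', hv']; exact h₁)
      (by rw [hu', hv']; exact h₂) hv hu (by rw [← h, add_comm])) hv hu
    rw [← neg_sub, mul_comm (X u)]
    exact neg_mem hI

lemma X_mul_X_sub_X_mul_X_mem_innerIdeal (hm : IsExponentMap P m) (K : Type*) [Field K]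
    {u v u' v' : Vertex P} (h : m u + m v = m u' + m v') :
    (X u * X v - X u' * X v' : MvPolynomial (Vertex P) K) ∈ innerIdeal K P := by
  wlog hu : u.1.1 ≤ v.1.1 generalizing u v
  · rw [mul_comm (X u)]
    exact this (by rwa [add_comm (m v)]) (by omega)
  wlog hu' : u'.1.1 ≤ v'.1.1 generalizing u' v'
  · rw [mul_comm (X u')]
    exact this (by rwa [add_comm (m v')]) (by omega)
  have hcol := hm.add_eq_add_of_isCellHarmonic (isCellHarmonic_single_fst P) h
  have hrow := hm.add_eq_add_of_isCellHarmonic (isCellHarmonic_single_snd P) h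
  simp only [Finsupp.single_add_single_eq_single_add_single one_ne_zero one_ne_zero] at hcol hrow
  have hu₁ : u'.1.1 = u.1.1 := by omega
  have hv₁ : v'.1.1 = v.1.1 := by omega
  rcases hrow with ⟨hu₂, hv₂⟩ | ⟨-, hu₂, hv₂⟩ | ⟨h2, -⟩
  · obtain rfl : u = u' := Subtype.ext (Prod.ext hu₁.symm hu₂)
    obtain rfl : v = v' := Subtype.ext (Prod.ext hv₁.symm hv₂)
    rw [sub_self]
    exact zero_mem _
  · rcases hu.lt_or_eq with hlt | heq
    · exact hm.X_mul_X_sub_X_mul_X_mem_innerIdeal_of_corners K hlt (Prod.ext hu₁ hv₂.symm)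
        (Prod.ext hv₁ hu₂.symm) h
    · obtain rfl : u' = v := Subtype.ext (Prod.ext (by omega) hv₂.symm)
      obtain rfl : v' = u := Subtype.ext (Prod.ext (by omega) hu₂.symm)
      rw [mul_comm, sub_self]
      exact zero_mem _
  · norm_num at h2

lemma monomial_sub_monomial_mem_innerIdeal (hm : IsExponentMap P m) (K : Type*) [Field K]
    {d d' : Vertex P →₀ ℕ} (hd : d.degree = 2) (hd' : d'.degree = 2)
    (h : Finsupp.linearCombination ℕ (fun v : Vertex P => m v) d =
      Finsupp.linearCombination ℕ (fun v : Vertex P => m v) d') :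
    monomial d (1 : K) - monomial d' 1 ∈ innerIdeal K P := by
  obtain ⟨u, v, rfl⟩ := Finsupp.exists_eq_single_add_single_of_degree_eq_two hd
  obtain ⟨u', v', rfl⟩ := Finsupp.exists_eq_single_add_single_of_degree_eq_two hd'
  simp only [map_add, Finsupp.linearCombination_single, one_smul] at h
  rw [monomial_single_add_single, monomial_single_add_single]
  exact hm.X_mul_X_sub_X_mul_X_mem_innerIdeal K h

end IsExponentMap

variable {K : Type*} [Field K] {ψ : MvPolynomial (Vertex P) K →ₐ[K] LaurentRing K P}

lemma innerIdeal_le_ker {m : ℕ × ℕ → (FreeVertex P →₀ ℤ)} (hm : IsCellHarmonic P m)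
    (hψm : ∀ v : Vertex P, ψ (X v) = AddMonoidAlgebra.single (m v) 1) :
    innerIdeal K P ≤ RingHom.ker ψ.toRingHom := by
  rw [innerIdeal, Ideal.span_le]
  rintro _ ⟨a, b, c, d, ⟨h₁, h₂, hbox⟩, hc, hd, rfl⟩
  have := hm.add_corners h₁.le h₂.le hbox
  rw [← hc, ← hd] at this
  simp [hψm, AddMonoidAlgebra.single_mul_single, this]

-- The exponent does not depend on the membership proof, so `choose!` yields a map on `ℕ × ℕ`.
lemma exists_psi_X_eq_single (hψ : psiSpec K P ψ) :
    ∀ w ∈ verts P, ∃ e, ∀ hw : w ∈ verts P,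
      ψ (X ⟨w, hw⟩) = AddMonoidAlgebra.single e 1 := by
  refine verts_induction
    (fun v hv => ⟨Finsupp.single ⟨v, hv⟩ 1, fun hw => hψ.1 ⟨v, hw⟩ hv⟩)
    fun p hp ⟨eb, hb⟩ ⟨ec, hc⟩ ⟨ed, hd⟩ => ⟨eb + ec - ed, fun hpV => ?_⟩
  have hV := cellVerts_subset_verts hp
  have key := hψ.2 ⟨p, hpV⟩ ⟨_, hV (by simp [cellVerts])⟩
    ⟨_, hV (by simp [cellVerts])⟩ ⟨_, hV (by simp [cellVerts])⟩ hp rfl rfl rfl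
  rw [hb, hc, hd, AddMonoidAlgebra.single_mul_single, mul_one] at key
  calc ψ (X ⟨p, hpV⟩)
      = ψ (X ⟨p, hpV⟩) * AddMonoidAlgebra.single ed 1 * AddMonoidAlgebra.single (-ed) 1 := by
        rw [mul_assoc, AddMonoidAlgebra.single_mul_single, add_neg_cancel, mul_one,
          ← AddMonoidAlgebra.one_def, mul_one]
    _ = _ := by rw [key, AddMonoidAlgebra.single_mul_single, mul_one, sub_eq_add_neg]

lemma exists_exponentMap (hψ : psiSpec K P ψ) :
    ∃ m, IsExponentMap P m ∧ ∀ v : Vertex P, ψ (X v) = AddMonoidAlgebra.single (m v) 1 := by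
  choose! m hm using exists_psi_X_eq_single hψ
  have hψm : ∀ v : Vertex P, ψ (X v) = AddMonoidAlgebra.single (m v) 1 := fun v => hm v v.2 v.2
  refine ⟨m, ⟨fun p hp => ?_, fun v hv => ?_⟩, hψm⟩
  · have hV := cellVerts_subset_verts hp
    have key := hψ.2 ⟨p, hV (by simp [cellVerts])⟩ ⟨_, hV (by simp [cellVerts])⟩
      ⟨_, hV (by simp [cellVerts])⟩ ⟨_, hV (by simp [cellVerts])⟩ hp rfl rfl rfl
    simp only [hψm, AddMonoidAlgebra.single_mul_single, mul_one] at key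
    exact AddMonoidAlgebra.single_left_injective one_ne_zero key
  · have key := hψ.1 ⟨v, hv.1⟩ hv
    rw [hψm] at key
    exact AddMonoidAlgebra.single_left_injective one_ne_zero key

end CellCollection

/-- The degree-2 graded components of `I_P` and `L_P = ker ψ` coincide. -/
theorem degree_two_components_eq (K : Type*) [Field K] (P : Finset Cell)
    (ψ : MvPolynomial {v : ℕ × ℕ // v ∈ verts P} K →ₐ[K] LaurentRing K P)
    (hψ : psiSpec K P ψ) :
    ∀ f : MvPolynomial {v : ℕ × ℕ // v ∈ verts P} K, f.IsHomogeneous 2 →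
      (f ∈ innerIdeal K P ↔ f ∈ RingHom.ker ψ.toRingHom) := by
  obtain ⟨m, hm, hψm⟩ := CellCollection.exists_exponentMap hψ
  intro f hf
  have hdeg : ∀ d ∈ f.support, d.degree = 2 := fun d hd => by
    rw [Finsupp.degree_eq_weight_one]
    exact hf (MvPolynomial.mem_support_iff.1 hd)
  refine ⟨fun h => CellCollection.innerIdeal_le_ker hm.1 hψm h, fun h => ?_⟩
  refine MvPolynomial.mem_ideal_of_mapDomain_eq_zero _ (fun d hd d' hd' hdd' =>
    hm.monomial_sub_monomial_mem_innerIdeal K (hdeg d hd) (hdeg d' hd') hdd') ?_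
  rw [← MvPolynomial.algHom_apply_eq_mapDomain _ ψ hψm]
  exact h
end

section
/- Let P be a finite collection of cells. Then the ideal I_P generated by the inner 2-minors of P is a prime ideal if and only if I_P = L_P, where L_P is the kernel of the natural map ψ from S to the Laurent ring in the free-vertex variables. -/
open scoped BigOperators

/-!
Every `ψ(x_v)` is a Laurent monomial, hence a unit of `T`. Gluing the cell relations of `ψ`
along an inner interval therefore gives `I_P ⊆ ker ψ`, and `ker ψ` is prime because `T` is a
domain. Conversely, let `I_P` be prime and `F` the fraction field of `S ⧸ I_P`. No variable lies
in `I_P`, since `ψ` does not kill it, so `y_c ↦ x_c` defines `θ : T → F`. By descending induction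
over the vertices, `θ ∘ ψ` agrees with `S → S ⧸ I_P → F` on every variable: the cell relations
hold in `S ⧸ I_P`, and the variables can be cancelled in `F`. Hence `ker ψ ⊆ I_P`.
-/

open MvPolynomial

/-- Transitivity of the cross-multiplication relation `(x, y) ~ (x', y') ↔ x * y' = x' * y`. -/
theorem cross_mul_eq_trans {M : Type*} [CommSemigroup M] [IsRightCancelMul M] {a b c d e g : M}
    (h₁ : a * e = b * d) (h₂ : b * g = c * e) : a * g = c * d := by
  refine mul_right_cancel (b := b * e) ?_
  calc a * g * (b * e) = a * e * (b * g) := by ac_rfl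
    _ = b * d * (c * e) := by rw [h₁, h₂]
    _ = c * d * (b * e) := by ac_rfl

theorem mul_corners_eq_of_cells {M : Type*} [CancelCommMonoid M] (f : ℕ × ℕ → M)
    {a b : ℕ × ℕ} (h₁ : a.1 ≤ b.1) (h₂ : a.2 ≤ b.2)
    (hcell : ∀ r s, a.1 ≤ r → r < b.1 → a.2 ≤ s → s < b.2 →
      f (r, s) * f (r + 1, s + 1) = f (r + 1, s) * f (r, s + 1)) :
    f a * f b = f (b.1, a.2) * f (a.1, b.2) := by
  have column : ∀ r, a.1 ≤ r → r < b.1 →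
      f (r, a.2) * f (r + 1, b.2) = f (r + 1, a.2) * f (r, b.2) := by
    intro r hr₁ hr₂
    suffices ∀ s, a.2 ≤ s → s ≤ b.2 → f (r, a.2) * f (r + 1, s) = f (r, s) * f (r + 1, a.2) from
      (this b.2 h₂ le_rfl).trans (mul_comm _ _)
    intro s hs
    induction s, hs using Nat.le_induction with
    | base => exact fun _ => rfl
    | succ s hs ih =>
      exact fun hsb => cross_mul_eq_trans (ih (by omega))
        ((hcell r s hr₁ hr₂ hs (by omega)).trans (mul_comm _ _))
  suffices ∀ x, a.1 ≤ x → x ≤ b.1 → f a * f (x, b.2) = f (x, a.2) * f (a.1, b.2) from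
    this b.1 h₁ le_rfl
  intro x hx
  induction x, hx using Nat.le_induction with
  | base => exact fun _ => rfl
  | succ x hx ih => exact fun hxb => cross_mul_eq_trans (ih (by omega)) (column x hx (by omega))

noncomputable def laurentLift {R σ A : Type*} [CommSemiring R] [CommSemiring A] [Algebra R A]
    (u : σ → Aˣ) : AddMonoidAlgebra R (σ →₀ ℤ) →ₐ[R] A :=
  AddMonoidAlgebra.lift R A _ <| (Units.coeHom A).comp <| AddMonoidHom.toMultiplicativeLeft <|
    Finsupp.liftAddHom fun c => zmultiplesHom _ (Additive.ofMul (u c))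

theorem laurentLift_single {R σ A : Type*} [CommSemiring R] [CommSemiring A] [Algebra R A]
    (u : σ → Aˣ) (c : σ) :
    laurentLift (R := R) u (AddMonoidAlgebra.single (Finsupp.single c 1) 1) = u c := by
  simp [laurentLift]

theorem corners_mem_verts {P : Finset Cell} {v : Cell} (hv : v ∈ P) :
    v ∈ verts P ∧ (v.1 + 1, v.2) ∈ verts P ∧ (v.1, v.2 + 1) ∈ verts P ∧
      (v.1 + 1, v.2 + 1) ∈ verts P := by
  simp only [verts, Finset.mem_biUnion]
  exact ⟨⟨v, hv, by simp [cellVerts]⟩, ⟨v, hv, by simp [cellVerts]⟩, ⟨v, hv, by simp [cellVerts]⟩,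
    ⟨v, hv, by simp [cellVerts]⟩⟩

theorem innerInterval_of_mem {P : Finset Cell} {v : Cell} (hv : v ∈ P) :
    InnerInterval P v (v.1 + 1, v.2 + 1) := by
  refine ⟨Nat.lt_succ_self _, Nat.lt_succ_self _, fun r s hr₁ hr₂ hs₁ hs₂ => ?_⟩
  obtain rfl : r = v.1 := by dsimp only at hr₂; omega
  obtain rfl : s = v.2 := by dsimp only at hs₂; omega
  exact hv

theorem verts_induction {P : Finset Cell} {Q : ℕ × ℕ → Prop}
    (free : ∀ v, freeVert P v → Q v)
    (cell : ∀ v ∈ P, Q (v.1 + 1, v.2) → Q (v.1, v.2 + 1) → Q (v.1 + 1, v.2 + 1) → Q v) :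
    ∀ v ∈ verts P, Q v := by
  intro v hv
  by_cases hvP : v ∈ P
  · -- bounds `v.1 + v.2`, for the termination measure
    have := Finset.le_sup (f := fun c : Cell => c.1 + c.2) hvP
    obtain ⟨-, h₁, h₂, h₃⟩ := corners_mem_verts hvP
    exact cell v hvP (verts_induction free cell _ h₁) (verts_induction free cell _ h₂)
      (verts_induction free cell _ h₃)
  · exact free v ⟨hv, hvP⟩
termination_by v => P.sup (fun c : Cell => c.1 + c.2) + 2 - (v.1 + v.2)

section
variable {K : Type*} [Field K] {P : Finset Cell}
  {ψ : MvPolynomial {v : ℕ × ℕ // v ∈ verts P} K →ₐ[K] LaurentRing K P}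

theorem cell_minor_mem_innerIdeal {v : Cell} (hv : v ∈ P) (h : v ∈ verts P)
    (h₁ : (v.1 + 1, v.2) ∈ verts P) (h₂ : (v.1, v.2 + 1) ∈ verts P)
    (h₃ : (v.1 + 1, v.2 + 1) ∈ verts P) :
    X ⟨v, h⟩ * X ⟨(v.1 + 1, v.2 + 1), h₃⟩ - X ⟨(v.1 + 1, v.2), h₁⟩ * X ⟨(v.1, v.2 + 1), h₂⟩ ∈
      innerIdeal K P :=
  Ideal.subset_span ⟨⟨v, h⟩, ⟨_, h₃⟩, ⟨_, h₁⟩, ⟨_, h₂⟩, innerInterval_of_mem hv, rfl, rfl, rfl⟩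

theorem psi_X_mul_psi_X (hψ : psiSpec K P ψ) {v : Cell} (hv : v ∈ P) (h : v ∈ verts P)
    (h₁ : (v.1 + 1, v.2) ∈ verts P) (h₂ : (v.1, v.2 + 1) ∈ verts P)
    (h₃ : (v.1 + 1, v.2 + 1) ∈ verts P) :
    ψ (X ⟨v, h⟩) * ψ (X ⟨(v.1 + 1, v.2 + 1), h₃⟩) =
      ψ (X ⟨(v.1 + 1, v.2), h₁⟩) * ψ (X ⟨(v.1, v.2 + 1), h₂⟩) :=
  hψ.2 _ _ _ _ hv rfl rfl rfl

theorem isUnit_psi_X (hψ : psiSpec K P ψ) (v : {v : ℕ × ℕ // v ∈ verts P}) :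
    IsUnit (ψ (X v)) := by
  suffices ∀ v ∈ verts P, ∀ h : v ∈ verts P, IsUnit (ψ (X ⟨v, h⟩)) from this v.1 v.2 v.2
  refine verts_induction (fun v hv h => ?_) (fun v hvP hb hc _ h => ?_)
  · rw [hψ.1 ⟨v, h⟩ hv]
    exact (Group.isUnit (Multiplicative.ofAdd _)).map (AddMonoidAlgebra.of K _)
  · obtain ⟨-, h₁, h₂, h₃⟩ := corners_mem_verts hvP
    refine isUnit_of_mul_isUnit_left (y := ψ (X ⟨_, h₃⟩)) ?_
    rw [psi_X_mul_psi_X hψ hvP h h₁ h₂ h₃]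
    exact (hb h₁).mul (hc h₂)

theorem innerIdeal_le_ker_psi (hψ : psiSpec K P ψ) :
    innerIdeal K P ≤ RingHom.ker ψ.toRingHom := by
  rw [innerIdeal, Ideal.span_le]
  rintro _ ⟨a, b, c, d, ⟨hab₁, hab₂, hcells⟩, hc, hd, rfl⟩
  let u : ℕ × ℕ → (LaurentRing K P)ˣ := fun v =>
    if h : v ∈ verts P then (isUnit_psi_X hψ ⟨v, h⟩).unit else 1
  have hu : ∀ v : {v : ℕ × ℕ // v ∈ verts P}, (u v : LaurentRing K P) = ψ (X v) := fun v => by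
    simp [u, v.2]
  have key := mul_corners_eq_of_cells u hab₁.le hab₂.le fun r s hr₁ hr₂ hs₁ hs₂ => by
    obtain ⟨h, h₁, h₂, h₃⟩ := corners_mem_verts (hcells r s hr₁ hr₂ hs₁ hs₂)
    apply Units.ext
    simpa only [Units.val_mul, hu ⟨_, h⟩, hu ⟨_, h₁⟩, hu ⟨_, h₂⟩, hu ⟨_, h₃⟩] using
      psi_X_mul_psi_X hψ (hcells r s hr₁ hr₂ hs₁ hs₂) h h₁ h₂ h₃
  rw [← hc, ← hd] at key
  have := congrArg Units.val key
  simp only [Units.val_mul, hu] at this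
  simp [RingHom.mem_ker, this]

theorem X_notMem_innerIdeal (hψ : psiSpec K P ψ) (v : {v : ℕ × ℕ // v ∈ verts P}) :
    X v ∉ innerIdeal K P := fun hv =>
  (isUnit_psi_X hψ v).ne_zero (innerIdeal_le_ker_psi hψ hv)

theorem exists_algHom_comp_psi_eq (hψ : psiSpec K P ψ) {A : Type*} [Field A] [Algebra K A]
    (φ : MvPolynomial {v : ℕ × ℕ // v ∈ verts P} K →ₐ[K] A)
    (hφ : innerIdeal K P ≤ RingHom.ker φ) (hne : ∀ v, φ (X v) ≠ 0) :
    ∃ θ : LaurentRing K P →ₐ[K] A, θ.comp ψ = φ := by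
  set θ : LaurentRing K P →ₐ[K] A := laurentLift fun c => Units.mk0 (φ (X ⟨c.1, c.2.1⟩)) (hne _)
  refine ⟨θ, algHom_ext fun v => ?_⟩
  suffices ∀ v ∈ verts P, ∀ h : v ∈ verts P, θ (ψ (X ⟨v, h⟩)) = φ (X ⟨v, h⟩) from
    this v.1 v.2 v.2
  refine verts_induction (fun v hv h => ?_) (fun v hvP hb hc hd h => ?_)
  · rw [hψ.1 ⟨v, h⟩ hv, AddMonoidAlgebra.of'_apply, laurentLift_single, Units.val_mk0]
  · obtain ⟨-, h₁, h₂, h₃⟩ := corners_mem_verts hvP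
    have hθ := congrArg θ (psi_X_mul_psi_X hψ hvP h h₁ h₂ h₃)
    have hφ_cell : φ (X ⟨v, h⟩) * φ (X ⟨_, h₃⟩) = φ (X ⟨_, h₁⟩) * φ (X ⟨_, h₂⟩) := by
      rw [← map_mul, ← map_mul, ← sub_eq_zero, ← map_sub]
      exact hφ (cell_minor_mem_innerIdeal hvP h h₁ h₂ h₃)
    rw [map_mul, map_mul, hb h₁, hc h₂, hd h₃, ← hφ_cell] at hθ
    exact mul_right_cancel₀ (hne _) hθ

theorem ker_psi_le_of_isPrime (hψ : psiSpec K P ψ) (hP : (innerIdeal K P).IsPrime) :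
    RingHom.ker ψ.toRingHom ≤ innerIdeal K P := by
  let π := (IsScalarTower.toAlgHom K _ (FractionRing (_ ⧸ innerIdeal K P))).comp
    (Ideal.Quotient.mkₐ K (innerIdeal K P))
  have hπ : ∀ f, π f = 0 ↔ f ∈ innerIdeal K P := fun f => by
    simp [π, Ideal.Quotient.eq_zero_iff_mem]
  obtain ⟨θ, hθ⟩ := exists_algHom_comp_psi_eq hψ π
    (fun f hf => (hπ f).2 hf) (fun v => (hπ _).not.2 (X_notMem_innerIdeal hψ v))
  intro f hf
  rw [← hπ, ← hθ, AlgHom.comp_apply]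
  simpa using congrArg θ hf

end

/-- `I_P` is a prime ideal if and only if `I_P = L_P = ker ψ`. -/
theorem innerIdeal_prime_iff_eq_LP (K : Type*) [Field K] (P : Finset Cell)
    (ψ : MvPolynomial {v : ℕ × ℕ // v ∈ verts P} K →ₐ[K] LaurentRing K P)
    (hψ : psiSpec K P ψ) :
    (innerIdeal K P).IsPrime ↔ innerIdeal K P = RingHom.ker ψ.toRingHom := by
  refine ⟨fun hP => le_antisymm (innerIdeal_le_ker_psi hψ) (ker_psi_le_of_isPrime hψ hP),
    fun h => ?_⟩
  rw [h]
  exact RingHom.ker_isPrime ψ.toRingHom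
end
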